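/- arXiv:1007.1693 — 3 statements merged into one kernel-verified Lean document; each statement's English description precedes it below -/
import Mathlib

section
/- For any homotopy data (α, τ, S) and any r ≥ 1, the group G_1(α,τ,S,r) is isomorphic to Z ⊕ ⨁_{1 ≤ i < j ≤ r} π, where π is the abelian group generated by α with relations a + τ(a) = 0. -/
open List

attribute [local instance] Classical.propDecidable

/-- A symbol in a nanophrase: either a separator `none` or a letter occurrence
`some (x, a)` where `x` is the letter's name and `a` its label in `α`. -/
abbrev NSym (α : Type) := Option (ℕ × α)

/-- A phrase: list of symbols; `none` separates components. -/
abbrev NPhrase (α : Type) := List (NSym α)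

/-- The list of letter occurrences of a phrase. -/
def occs {α : Type} (p : NPhrase α) : List (ℕ × α) := p.filterMap id

/-- The set of (names of) letters appearing in a phrase. -/
def lettersOf {α : Type} (p : NPhrase α) : Finset ℕ := ((occs p).map Prod.fst).toFinset

/-- The rank: number of distinct letters. -/
def rank {α : Type} (p : NPhrase α) : ℕ := (lettersOf p).card

/-- A nanophrase: each letter appears exactly twice, with a consistent label. -/
def IsNano {α : Type} (p : NPhrase α) : Prop :=
  (∀ x ∈ lettersOf p, ((occs p).map Prod.fst).count x = 2) ∧
  (∀ x a b, (x, a) ∈ occs p → (x, b) ∈ occs p → a = b)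

/-- The number of components of a phrase. -/
def comps {α : Type} (p : NPhrase α) : ℕ := p.countP (fun s => s.isNone) + 1

/-- The subphrase with letter set restricted to `T`. -/
def restrict {α : Type} (p : NPhrase α) (T : Finset ℕ) : NPhrase α :=
  p.filter (fun s => match s with | none => true | some (x, _) => decide (x ∈ T))

/-- Isomorphism of (nano)phrases: a renaming of letters preserving labels. -/
def Iso {α : Type} (p q : NPhrase α) : Prop :=
  ∃ σ : ℕ ≃ ℕ, p.map (Option.map (fun xa => (σ xa.1, xa.2))) = q

/-- Angle bracket: the number of subphrases of `p` isomorphic to `q`. -/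
noncomputable def bracketN {α : Type} (q p : NPhrase α) : ℕ :=
  ((lettersOf p).powerset.filter (fun T => Iso (restrict p T) q)).card

/-- Homotopy moves for homotopy data `(α, τ, S)`. -/
inductive HMove {α : Type} (τ : α → α) (S : Set (α × α × α)) : NPhrase α → NPhrase α → Prop
  | h1 (x y : NPhrase α) (i : ℕ) (a : α) :
      HMove τ S (x ++ [some (i,a), some (i,a)] ++ y) (x ++ y)
  | h2 (x y z : NPhrase α) (i j : ℕ) (a b : α) (h : a = τ b) :
      HMove τ S (x ++ [some (i,a), some (j,b)] ++ y ++ [some (j,b), some (i,a)] ++ z)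
        (x ++ y ++ z)
  | h3 (x y z t : NPhrase α) (i j k : ℕ) (a b c : α) (h : (a,b,c) ∈ S) :
      HMove τ S
        (x ++ [some (i,a), some (j,b)] ++ y ++ [some (i,a), some (k,c)] ++ z
           ++ [some (j,b), some (k,c)] ++ t)
        (x ++ [some (j,b), some (i,a)] ++ y ++ [some (k,c), some (i,a)] ++ z
           ++ [some (k,c), some (j,b)] ++ t)

/-- Homotopy: equivalence generated by isomorphism and the moves H1, H2, H3. -/
def Homotopic {α : Type} (τ : α → α) (S : Set (α × α × α)) : NPhrase α → NPhrase α → Prop :=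
  Relation.EqvGen (fun p q => HMove τ S p q ∨ Iso p q)

/-- Build a phrase from a list of components. -/
def ofComponents {α : Type} (L : List (List (ℕ × α))) : NPhrase α :=
  ((L.map (fun c => c.map some)).intersperse [none]).flatten

/-- The generators: `r`-component nanophrases over α. -/
def NP (α : Type) (r : ℕ) := {p : NPhrase α // IsNano p ∧ comps p = r}

open FreeAbelianGroup in
/-- The relations defining `G_n(α,τ,S,r)`: identification of isomorphic
nanophrases, the relations coming from the homotopy moves H1, H2, H3, and the
vanishing of all nanophrases of rank greater than `n`. -/
def relSet {α : Type} (τ : α → α) (S : Set (α × α × α)) (r n : ℕ) :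
    Set (FreeAbelianGroup (NP α r)) :=
  {g | ∃ p q : NP α r, Iso p.1 q.1 ∧ g = of p - of q} ∪
  {g | ∃ (p : NP α r) (x y : NPhrase α) (i : ℕ) (a : α),
        p.1 = x ++ [some (i,a), some (i,a)] ++ y ∧ g = of p} ∪
  {g | ∃ (p q q' : NP α r) (x y z : NPhrase α) (i j : ℕ) (a b : α),
        a = τ b ∧
        p.1 = x ++ [some (i,a), some (j,b)] ++ y ++ [some (j,b), some (i,a)] ++ z ∧
        q.1 = x ++ [some (i,a)] ++ y ++ [some (i,a)] ++ z ∧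
        q'.1 = x ++ [some (j,b)] ++ y ++ [some (j,b)] ++ z ∧
        g = of p + of q + of q'} ∪
  {g | ∃ (p1 p2 p3 p4 q1 q2 q3 q4 : NP α r) (x y z t : NPhrase α)
        (i j k : ℕ) (a b c : α) (A B C : NSym α),
        (a,b,c) ∈ S ∧ A = some (i,a) ∧ B = some (j,b) ∧ C = some (k,c) ∧
        p1.1 = x ++ [A,B] ++ y ++ [A,C] ++ z ++ [B,C] ++ t ∧
        p2.1 = x ++ [A,B] ++ y ++ [A] ++ z ++ [B] ++ t ∧
        p3.1 = x ++ [A] ++ y ++ [A,C] ++ z ++ [C] ++ t ∧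
        p4.1 = x ++ [B] ++ y ++ [C] ++ z ++ [B,C] ++ t ∧
        q1.1 = x ++ [B,A] ++ y ++ [C,A] ++ z ++ [C,B] ++ t ∧
        q2.1 = x ++ [B,A] ++ y ++ [A] ++ z ++ [B] ++ t ∧
        q3.1 = x ++ [A] ++ y ++ [C,A] ++ z ++ [C] ++ t ∧
        q4.1 = x ++ [B] ++ y ++ [C] ++ z ++ [C,B] ++ t ∧
        g = of p1 + of p2 + of p3 + of p4 - of q1 - of q2 - of q3 - of q4} ∪
  {g | ∃ p : NP α r, n < rank p.1 ∧ g = of p}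

/-- The group `G_n(α,τ,S,r)`, image of a universal degree-`n` invariant. -/
abbrev Gn (α : Type) (τ : α → α) (S : Set (α × α × α)) (r n : ℕ) :=
  FreeAbelianGroup (NP α r) ⧸ AddSubgroup.closure (relSet τ S r n)

/-- The group π: generated by α with relations a + τ(a) = 0. -/
def piRel {α : Type} (τ : α → α) : AddSubgroup (FreeAbelianGroup α) :=
  AddSubgroup.closure {g | ∃ a, g = FreeAbelianGroup.of a + FreeAbelianGroup.of (τ a)}

abbrev PiGrp {α : Type} (τ : α → α) := FreeAbelianGroup α ⧸ piRel τ

/-!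
Modulo nanophrases of rank at least two, only two kinds of generators survive: the letterless
phrase `E` (just the `r - 1` separators) and the one-letter phrases, which up to isomorphism are
the chords `A_{ij}^a` whose letter has label `a` and its two ends in components `i ≤ j`.
H1 kills the chords with `i = j`, whose two ends are adjacent. Crossing two parallel chords
labelled `τ a` and `a` gives a phrase of rank two whose H2 relation reads
`[A_{ij}^{τ a}] + [A_{ij}^a] = 0`. Hence `E` and the `A_{ij}^a` with `i < j` generate `G₁`
subject to `a + τ a = 0`.

Conversely, reading off the components and labels of the occurrences of a phrase gives an
invariant with value `(1, 0)` on `E`, the class of `a` at `(i, j)` on `A_{ij}^a`, and `0` on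
all phrases of rank at least two. It kills every relation: H3 and the rank relation only involve
phrases of rank at least two, isomorphisms do not change components and labels, and the H2
relation contributes the class of `τ b` plus that of `b`. The two maps are mutually inverse.
-/

namespace Nanophrase

open FreeAbelianGroup

variable {α : Type}

@[simp] lemma occs_nil : occs ([] : NPhrase α) = [] := rfl

@[simp] lemma occs_cons_none (l : NPhrase α) : occs (none :: l) = occs l := rfl

@[simp] lemma occs_cons_some (u : ℕ × α) (l : NPhrase α) : occs (some u :: l) = u :: occs l :=
  rfl

@[simp] lemma occs_append (x y : NPhrase α) : occs (x ++ y) = occs x ++ occs y :=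
  filterMap_append

@[simp] lemma occs_replicate_none (n : ℕ) : occs (replicate n (none : NSym α)) = [] := by
  induction n <;> simp_all [replicate_succ]

def sepCount (p : NPhrase α) : ℕ := p.countP (·.isNone)

@[simp] lemma sepCount_nil : sepCount ([] : NPhrase α) = 0 := rfl

@[simp] lemma sepCount_cons_none (l : NPhrase α) : sepCount (none :: l) = sepCount l + 1 := by
  simp [sepCount]

@[simp] lemma sepCount_cons_some (u : ℕ × α) (l : NPhrase α) :
    sepCount (some u :: l) = sepCount l := by
  simp [sepCount]

@[simp] lemma sepCount_append (x y : NPhrase α) : sepCount (x ++ y) = sepCount x + sepCount y :=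
  countP_append

@[simp] lemma sepCount_replicate_none (n : ℕ) : sepCount (replicate n (none : NSym α)) = n := by
  induction n <;> simp_all [replicate_succ]

@[simp] lemma comps_eq_sepCount_add_one (p : NPhrase α) : comps p = sepCount p + 1 := rfl

lemma eq_replicate_none_of_occs_eq_nil {l : NPhrase α} (h : occs l = []) :
    l = replicate l.length none := by
  induction l with
  | nil => rfl
  | cons s t ih =>
    cases s with
    | none => simpa [replicate_succ] using ih h
    | some u => simp at h

lemma exists_eq_replicate_none_append_of_occs_eq_cons {l : NPhrase α} {u : ℕ × α}
    {rest : List (ℕ × α)} (h : occs l = u :: rest) :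
    ∃ (n : ℕ) (l' : NPhrase α), l = replicate n none ++ some u :: l' ∧ occs l' = rest := by
  induction l with
  | nil => simp at h
  | cons s t ih =>
    cases s with
    | none =>
      obtain ⟨n, l', rfl, hl'⟩ := ih h
      exact ⟨n + 1, l', rfl, hl'⟩
    | some v =>
      obtain ⟨rfl, rfl⟩ := List.cons_eq_cons.mp h
      exact ⟨0, t, rfl, rfl⟩

lemma length_occs_of_isNano {p : NPhrase α} (h : IsNano p) : (occs p).length = 2 * rank p := by
  rw [← length_map (f := Prod.fst), ← sum_toFinset_count_eq_length,
    show ((occs p).map Prod.fst).toFinset = lettersOf p from rfl, Finset.sum_congr rfl h.1,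
    Finset.sum_const, smul_eq_mul, mul_comm, rank]

lemma occs_eq_nil_of_rank_eq_zero {p : NPhrase α} (h : rank p = 0) : occs p = [] := by
  simpa [rank, lettersOf] using h

def compLabels : ℕ → NPhrase α → List (ℕ × α)
  | _, [] => []
  | c, none :: l => compLabels (c + 1) l
  | c, some u :: l => (c, u.2) :: compLabels c l

@[simp] lemma compLabels_nil (c : ℕ) : compLabels c ([] : NPhrase α) = [] := rfl

@[simp] lemma compLabels_cons_none (c : ℕ) (l : NPhrase α) :
    compLabels c (none :: l) = compLabels (c + 1) l := rfl

@[simp] lemma compLabels_cons_some (c : ℕ) (u : ℕ × α) (l : NPhrase α) :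
    compLabels c (some u :: l) = (c, u.2) :: compLabels c l := rfl

@[simp] lemma compLabels_append (c : ℕ) (x y : NPhrase α) :
    compLabels c (x ++ y) = compLabels c x ++ compLabels (c + sepCount x) y := by
  induction x generalizing c with
  | nil => simp
  | cons s t ih => cases s <;> simp [ih, Nat.add_right_comm, Nat.add_assoc]

@[simp] lemma compLabels_replicate_none (c n : ℕ) :
    compLabels c (replicate n (none : NSym α)) = [] := by
  induction n generalizing c <;> simp_all [replicate_succ]

@[simp] lemma length_compLabels (c : ℕ) (l : NPhrase α) :
    (compLabels c l).length = (occs l).length := by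
  induction l generalizing c with
  | nil => rfl
  | cons s t ih => cases s <;> simp [ih]

lemma compLabels_eq_nil {l : NPhrase α} (h : occs l = []) (c : ℕ) : compLabels c l = [] :=
  length_eq_zero_iff.mp (by simp [h])

lemma compLabels_map_rename (σ : ℕ → ℕ) (c : ℕ) (l : NPhrase α) :
    compLabels c (l.map (Option.map fun u => (σ u.1, u.2))) = compLabels c l := by
  induction l generalizing c with
  | nil => rfl
  | cons s t ih => cases s <;> simp [ih]

def chord (n₁ n₂ n₃ x : ℕ) (a : α) : NPhrase α :=
  replicate n₁ none ++ some (x, a) :: (replicate n₂ none ++ some (x, a) :: replicate n₃ none)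

@[simp] lemma occs_chord (n₁ n₂ n₃ x : ℕ) (a : α) :
    occs (chord n₁ n₂ n₃ x a) = [(x, a), (x, a)] := by
  simp [chord]

@[simp] lemma sepCount_chord (n₁ n₂ n₃ x : ℕ) (a : α) :
    sepCount (chord n₁ n₂ n₃ x a) = n₁ + n₂ + n₃ := by
  simp [chord, Nat.add_assoc]

lemma compLabels_chord (n₁ n₂ n₃ x : ℕ) (a : α) :
    compLabels 0 (chord n₁ n₂ n₃ x a) = [(n₁, a), (n₁ + n₂, a)] := by
  simp [chord]

lemma isNano_chord (n₁ n₂ n₃ x : ℕ) (a : α) : IsNano (chord n₁ n₂ n₃ x a) := by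
  refine ⟨fun y hy => ?_, fun y b c hb hc => ?_⟩ <;> simp_all [lettersOf]

lemma iso_chord (n₁ n₂ n₃ x y : ℕ) (a : α) : Iso (chord n₁ n₂ n₃ x a) (chord n₁ n₂ n₃ y a) :=
  ⟨Equiv.swap x y, by simp [chord]⟩

lemma exists_eq_chord_of_rank_eq_one {p : NPhrase α} (hp : IsNano p) (h : rank p = 1) :
    ∃ n₁ n₂ n₃ x a, p = chord n₁ n₂ n₃ x a := by
  obtain ⟨⟨x, a⟩, ⟨y, b⟩, hocc⟩ := length_eq_two.mp (by rw [length_occs_of_isNano hp, h])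
  obtain rfl : x = y := by
    have hcount := hp.1 x (by simp [lettersOf, hocc])
    rw [hocc] at hcount
    by_contra hne
    simp [Ne.symm hne] at hcount
  obtain rfl : a = b := hp.2 x a b (by simp [hocc]) (by simp [hocc])
  obtain ⟨n₁, l, rfl, hl⟩ := exists_eq_replicate_none_append_of_occs_eq_cons hocc
  obtain ⟨n₂, l', rfl, hl'⟩ := exists_eq_replicate_none_append_of_occs_eq_cons hl
  exact ⟨n₁, n₂, l'.length, x, a, by rw [chord, ← eq_replicate_none_of_occs_eq_nil hl']⟩

abbrev Pairs (r : ℕ) := {ij : Fin r × Fin r // ij.1 < ij.2}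

def trivialNP {r : ℕ} (hr : 1 ≤ r) : NP α r :=
  ⟨replicate (r - 1) none, by simp [IsNano, lettersOf], by simp; omega⟩

def chordNP {r : ℕ} (n₁ n₂ n₃ x : ℕ) (a : α) (h : n₁ + n₂ + n₃ + 1 = r) : NP α r :=
  ⟨chord n₁ n₂ n₃ x a, isNano_chord n₁ n₂ n₃ x a, by simpa using h⟩

def pairChord {r : ℕ} (ij : Pairs r) (a : α) : NP α r :=
  chordNP ij.1.1 (ij.1.2 - ij.1.1) (r - 1 - ij.1.2) 0 a <| by
    have hij : (ij.1.1 : ℕ) < ij.1.2 := ij.2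
    have hj := ij.1.2.isLt
    omega

section Relations

variable (τ : α → α) (S : Set (α × α × α)) {r : ℕ}

def nanoClass (p : NP α r) : Gn α τ S r 1 := QuotientAddGroup.mk (of p)

variable {τ S}

lemma mk_eq_zero_of_mem_relSet {g : FreeAbelianGroup (NP α r)} (h : g ∈ relSet τ S r 1) :
    (g : Gn α τ S r 1) = 0 :=
  (QuotientAddGroup.eq_zero_iff g).mpr (AddSubgroup.subset_closure h)

lemma nanoClass_eq_of_iso {p q : NP α r} (h : Iso p.1 q.1) :
    nanoClass τ S p = nanoClass τ S q := by
  rw [← sub_eq_zero]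
  exact mk_eq_zero_of_mem_relSet (.inl (.inl (.inl (.inl ⟨p, q, h, rfl⟩))))

lemma nanoClass_eq_zero_of_h1 {p : NP α r} {x y : NPhrase α} {i : ℕ} {a : α}
    (h : p.1 = x ++ [some (i, a), some (i, a)] ++ y) : nanoClass τ S p = 0 :=
  mk_eq_zero_of_mem_relSet (.inl (.inl (.inl (.inr ⟨p, x, y, i, a, h, rfl⟩))))

lemma nanoClass_h2 {p q q' : NP α r} {x y z : NPhrase α} {i j : ℕ} {a b : α} (hab : a = τ b)
    (hp : p.1 = x ++ [some (i, a), some (j, b)] ++ y ++ [some (j, b), some (i, a)] ++ z)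
    (hq : q.1 = x ++ [some (i, a)] ++ y ++ [some (i, a)] ++ z)
    (hq' : q'.1 = x ++ [some (j, b)] ++ y ++ [some (j, b)] ++ z) :
    nanoClass τ S p + nanoClass τ S q + nanoClass τ S q' = 0 :=
  mk_eq_zero_of_mem_relSet
    (.inl (.inl (.inr ⟨p, q, q', x, y, z, i, j, a, b, hab, hp, hq, hq', rfl⟩)))

lemma nanoClass_eq_zero_of_one_lt_rank {p : NP α r} (h : 1 < rank p.1) : nanoClass τ S p = 0 :=
  mk_eq_zero_of_mem_relSet (.inr ⟨p, h, rfl⟩)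

lemma nanoClass_chordNP_rename (n₁ n₂ n₃ x y : ℕ) {a : α} {h : n₁ + n₂ + n₃ + 1 = r} :
    nanoClass τ S (chordNP n₁ n₂ n₃ x a h) = nanoClass τ S (chordNP n₁ n₂ n₃ y a h) :=
  nanoClass_eq_of_iso (iso_chord n₁ n₂ n₃ x y a)

lemma nanoClass_chordNP_tau_add_eq_zero (n₁ n₂ n₃ : ℕ) (a : α) (h : n₁ + n₂ + n₃ + 1 = r) :
    nanoClass τ S (chordNP n₁ n₂ n₃ 0 (τ a) h) + nanoClass τ S (chordNP n₁ n₂ n₃ 0 a h) = 0 := by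
  let P : NPhrase α := replicate n₁ none ++ [some (0, τ a), some (1, a)] ++ replicate n₂ none ++
    [some (1, a), some (0, τ a)] ++ replicate n₃ none
  have hP : IsNano P := by
    simp only [P, IsNano, lettersOf]
    aesop
  have hrank : rank P = 2 := by simp [P, rank, lettersOf]
  let Pnp : NP α r := ⟨P, hP, by simp [P]; omega⟩
  have hh2 := nanoClass_h2 (τ := τ) (S := S) (p := Pnp)
    (q := chordNP n₁ n₂ n₃ 0 (τ a) h) (q' := chordNP n₁ n₂ n₃ 1 a h) rfl rfl
    (by simp [chordNP, chord]) (by simp [chordNP, chord])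
  rwa [nanoClass_eq_zero_of_one_lt_rank (p := Pnp) (by simp [Pnp, hrank]), zero_add,
    nanoClass_chordNP_rename n₁ n₂ n₃ 1 0] at hh2

end Relations

section PairValue

variable {M : Type*} {r : ℕ}

def pairValue [Zero M] (c₁ c₂ : ℕ) (m : M) : Pairs r → M :=
  fun ij => if (ij.1.1 : ℕ) = c₁ ∧ (ij.1.2 : ℕ) = c₂ then m else 0

lemma pairValue_self [Zero M] (c : ℕ) (m : M) : pairValue (r := r) c c m = 0 := by
  funext ij
  have := ij.2
  simp only [pairValue, Pi.zero_apply, ite_eq_right_iff, and_imp]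
  omega

@[simp] lemma pairValue_zero [Zero M] (c₁ c₂ : ℕ) : pairValue (r := r) c₁ c₂ (0 : M) = 0 := by
  funext ij
  simp [pairValue]

lemma pairValue_add [AddZeroClass M] (c₁ c₂ : ℕ) (m n : M) :
    pairValue (r := r) c₁ c₂ m + pairValue c₁ c₂ n = pairValue c₁ c₂ (m + n) := by
  funext ij
  simp only [pairValue, Pi.add_apply]
  split_ifs <;> simp

lemma pairValue_eq_single [Zero M] (ij : Pairs r) (m : M) :
    pairValue ij.1.1 ij.1.2 m = Pi.single ij m := by
  funext kl
  simp only [pairValue, Pi.single_apply, ← Fin.ext_iff, ← Prod.ext_iff, ← Subtype.ext_iff]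

end PairValue

def piOf (τ : α → α) (a : α) : PiGrp τ := QuotientAddGroup.mk (of a)

lemma piOf_add_piOf_tau (τ : α → α) (a : α) : piOf τ a + piOf τ (τ a) = 0 :=
  (QuotientAddGroup.eq_zero_iff _).mpr (AddSubgroup.subset_closure ⟨a, rfl⟩)

section Invariant

variable (τ : α → α) {r : ℕ}

noncomputable def labelsValue : List (ℕ × α) → ℤ × (Pairs r → PiGrp τ)
  | [] => (1, 0)
  | [(c₁, a), (c₂, _)] => (0, pairValue c₁ c₂ (piOf τ a))
  | _ => 0

noncomputable def phraseValue (p : NPhrase α) : ℤ × (Pairs r → PiGrp τ) :=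
  labelsValue τ (compLabels 0 p)

variable {τ}

lemma phraseValue_eq_zero_of_three_le {p : NPhrase α} (h : 3 ≤ (occs p).length) :
    phraseValue τ p = (0 : ℤ × (Pairs r → PiGrp τ)) := by
  rw [phraseValue]
  rw [← length_compLabels 0] at h
  match compLabels 0 p, h with
  | _ :: _ :: _ :: _, _ => rfl

lemma phraseValue_two_occs (x y z : NPhrase α) (u v : ℕ × α) :
    phraseValue τ (x ++ some u :: (y ++ some v :: z)) =
      if occs x = [] ∧ occs y = [] ∧ occs z = [] then
        ((0 : ℤ), pairValue (r := r) (sepCount x) (sepCount x + sepCount y) (piOf τ u.2))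
      else 0 := by
  split_ifs with h
  · obtain ⟨hx, hy, hz⟩ := h
    simp [phraseValue, compLabels_eq_nil, hx, hy, hz, labelsValue]
  · apply phraseValue_eq_zero_of_three_le
    simp only [not_and_or, ← ne_eq, ← length_pos_iff] at h
    simp only [occs_append, occs_cons_some, length_append, length_cons]
    omega

lemma phraseValue_rename (σ : ℕ → ℕ) (p : NPhrase α) :
    phraseValue τ (p.map (Option.map fun u => (σ u.1, u.2))) =
      (phraseValue τ p : ℤ × (Pairs r → PiGrp τ)) := by
  rw [phraseValue, phraseValue, compLabels_map_rename]

lemma phraseValue_h1 (x y : NPhrase α) (u : ℕ × α) :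
    phraseValue τ (x ++ [some u, some u] ++ y) = (0 : ℤ × (Pairs r → PiGrp τ)) := by
  have := phraseValue_two_occs (τ := τ) (r := r) x [] y u u
  simp_all [pairValue_self]

lemma phraseValue_h2 {x y z : NPhrase α} {i j : ℕ} {a b : α} (hab : a = τ b) :
    phraseValue τ (x ++ [some (i, a)] ++ y ++ [some (i, a)] ++ z) +
      phraseValue τ (x ++ [some (j, b)] ++ y ++ [some (j, b)] ++ z) =
        (0 : ℤ × (Pairs r → PiGrp τ)) := by
  have h₁ := phraseValue_two_occs (τ := τ) (r := r) x y z (i, a) (i, a)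
  have h₂ := phraseValue_two_occs (τ := τ) (r := r) x y z (j, b) (j, b)
  simp only [append_assoc, cons_append, nil_append]
  rw [h₁, h₂]
  split_ifs
  · rw [Prod.mk_add_mk, pairValue_add, hab, add_comm (piOf τ _), piOf_add_piOf_tau,
      pairValue_zero, add_zero, Prod.mk_zero_zero]
  · simp

lemma phraseValue_trivialNP (hr : 1 ≤ r) :
    phraseValue τ (trivialNP (α := α) hr).1 = ((1, 0) : ℤ × (Pairs r → PiGrp τ)) := by
  simp [trivialNP, phraseValue, labelsValue]

lemma phraseValue_chord (n₁ n₂ n₃ x : ℕ) (a : α) :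
    phraseValue τ (chord n₁ n₂ n₃ x a) =
      ((0 : ℤ), pairValue (r := r) n₁ (n₁ + n₂) (piOf τ a)) := by
  rw [phraseValue, compLabels_chord]
  rfl

lemma phraseValue_pairChord (ij : Pairs r) (a : α) :
    phraseValue τ (pairChord ij a).1 = ((0 : ℤ), Pi.single ij (piOf τ a)) := by
  rw [pairChord, chordNP, phraseValue_chord, Nat.add_sub_cancel' ij.2.le, pairValue_eq_single]

end Invariant

section Homs

variable (τ : α → α) (S : Set (α × α × α)) {r : ℕ}

lemma lift_phraseValue_eq_zero_of_mem_relSet {g : FreeAbelianGroup (NP α r)}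
    (hg : g ∈ relSet τ S r 1) :
    lift (fun p : NP α r => (phraseValue τ p.1 : ℤ × (Pairs r → PiGrp τ))) g = 0 := by
  rcases hg with ((((⟨p, q, ⟨σ, hσ⟩, rfl⟩ | ⟨p, x, y, i, a, hp, rfl⟩) |
    ⟨p, q, q', x, y, z, i, j, a, b, hab, hp, hq, hq', rfl⟩) |
    ⟨p₁, p₂, p₃, p₄, q₁, q₂, q₃, q₄, x, y, z, t, i, j, k, a, b, c, A, B, C,
      -, rfl, rfl, rfl, h₁, h₂, h₃, h₄, h₅, h₆, h₇, h₈, rfl⟩) | ⟨p, hp, rfl⟩)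
  · simp [← hσ, phraseValue_rename]
  · rw [lift_apply_of, hp, phraseValue_h1]
  · rw [map_add, map_add, lift_apply_of, lift_apply_of, lift_apply_of, hp, hq, hq',
      phraseValue_eq_zero_of_three_le (by simp; omega), zero_add, phraseValue_h2 hab]
  · simp (disch := simp; omega) only [h₁, h₂, h₃, h₄, h₅, h₆, h₇, h₈, map_add, map_sub,
      lift_apply_of, phraseValue_eq_zero_of_three_le, add_zero, sub_zero]
  · rw [lift_apply_of]
    exact phraseValue_eq_zero_of_three_le (by rw [length_occs_of_isNano p.2.1]; omega)

noncomputable def invariantHom : Gn α τ S r 1 →+ ℤ × (Pairs r → PiGrp τ) :=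
  QuotientAddGroup.lift _ (lift fun p : NP α r => phraseValue τ p.1)
    ((AddSubgroup.closure_le _).mpr fun _ hg => lift_phraseValue_eq_zero_of_mem_relSet τ S hg)

lemma invariantHom_nanoClass (p : NP α r) :
    invariantHom τ S (nanoClass τ S p) = phraseValue τ p.1 :=
  lift_apply_of _ p

noncomputable def chordHom (ij : Pairs r) : PiGrp τ →+ Gn α τ S r 1 :=
  QuotientAddGroup.lift _ (lift fun a => nanoClass τ S (pairChord ij a)) <|
    (AddSubgroup.closure_le _).mpr <| by
      rintro _ ⟨a, rfl⟩
      rw [SetLike.mem_coe, AddMonoidHom.mem_ker, map_add, lift_apply_of, lift_apply_of, add_comm]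
      exact nanoClass_chordNP_tau_add_eq_zero ..

lemma chordHom_piOf (ij : Pairs r) (a : α) :
    chordHom τ S ij (piOf τ a) = nanoClass τ S (pairChord ij a) :=
  lift_apply_of _ a

noncomputable def pairsHom : (Pairs r → PiGrp τ) →+ Gn α τ S r 1 :=
  ∑ ij, (chordHom τ S ij).comp (Pi.evalAddMonoidHom _ ij)

lemma pairsHom_single (ij : Pairs r) (x : PiGrp τ) :
    pairsHom τ S (Pi.single ij x) = chordHom τ S ij x := by
  simp [pairsHom, Pi.single_apply, apply_ite]

noncomputable def inverseHom (hr : 1 ≤ r) : ℤ × (Pairs r → PiGrp τ) →+ Gn α τ S r 1 :=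
  (zmultiplesHom _ (nanoClass τ S (trivialNP hr))).coprod (pairsHom τ S)

lemma invariantHom_comp_pairsHom :
    (invariantHom τ S).comp (pairsHom τ S) = AddMonoidHom.inr ℤ (Pairs r → PiGrp τ) := by
  ext ij a : 3
  change invariantHom τ S (pairsHom τ S (Pi.single ij (piOf τ a))) = (0, Pi.single ij (piOf τ a))
  rw [pairsHom_single, chordHom_piOf, invariantHom_nanoClass, phraseValue_pairChord]

lemma invariantHom_comp_inverseHom (hr : 1 ≤ r) :
    (invariantHom τ S).comp (inverseHom τ S hr) = AddMonoidHom.id _ := by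
  ext ⟨n, f⟩ : 1
  have hf := congr($(invariantHom_comp_pairsHom τ S) f)
  simp only [AddMonoidHom.comp_apply, AddMonoidHom.inr_apply] at hf
  simp [inverseHom, hf, invariantHom_nanoClass, phraseValue_trivialNP]

lemma inverseHom_phraseValue_chord (hr : 1 ≤ r) (n₁ n₂ n₃ x : ℕ) (a : α)
    (h : n₁ + n₂ + n₃ + 1 = r) :
    inverseHom τ S hr (phraseValue τ (chord n₁ n₂ n₃ x a)) =
      nanoClass τ S (chordNP n₁ n₂ n₃ x a h) := by
  rcases Nat.eq_zero_or_pos n₂ with rfl | hn₂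
  · rw [phraseValue_chord, add_zero, pairValue_self, Prod.mk_zero_zero, map_zero,
      nanoClass_eq_zero_of_h1 (x := replicate n₁ none) (y := replicate n₃ none) (i := x) (a := a)
        (by simp [chordNP, chord])]
  · let ij : Pairs r := ⟨(⟨n₁, by omega⟩, ⟨n₁ + n₂, by omega⟩), by simp [Fin.lt_def]; omega⟩
    have hij : pairChord ij a = chordNP n₁ n₂ n₃ 0 a h := by
      simp only [pairChord, ij, Nat.add_sub_cancel_left]
      congr
      omega
    rw [phraseValue_chord, pairValue_eq_single ij, inverseHom, AddMonoidHom.coprod_apply,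
      map_zero, zero_add, pairsHom_single, chordHom_piOf, hij, nanoClass_chordNP_rename]

lemma inverseHom_phraseValue (hr : 1 ≤ r) (p : NP α r) :
    inverseHom τ S hr (phraseValue τ p.1) = nanoClass τ S p := by
  rcases Nat.lt_trichotomy (rank p.1) 1 with h₀ | h₁ | h₂
  · have hunit : p = trivialNP hr := by
      have hp := eq_replicate_none_of_occs_eq_nil (occs_eq_nil_of_rank_eq_zero (p := p.1) (by omega))
      have hc := p.2.2
      rw [hp] at hc
      apply Subtype.ext
      rw [hp]
      simp [trivialNP, ← hc]
    rw [hunit, phraseValue_trivialNP, inverseHom, AddMonoidHom.coprod_apply, map_zero, add_zero,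
      zmultiplesHom_apply, one_zsmul]
  · obtain ⟨n₁, n₂, n₃, x, a, hp⟩ := exists_eq_chord_of_rank_eq_one p.2.1 h₁
    have hc : n₁ + n₂ + n₃ + 1 = r := by simpa [hp] using p.2.2
    obtain rfl : p = chordNP n₁ n₂ n₃ x a hc := Subtype.ext hp
    exact inverseHom_phraseValue_chord τ S hr n₁ n₂ n₃ x a hc
  · rw [phraseValue_eq_zero_of_three_le (by rw [length_occs_of_isNano p.2.1]; omega), map_zero,
      nanoClass_eq_zero_of_one_lt_rank h₂]

lemma inverseHom_comp_invariantHom (hr : 1 ≤ r) :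
    (inverseHom τ S hr).comp (invariantHom τ S) = AddMonoidHom.id _ := by
  ext p
  exact (congrArg _ (invariantHom_nanoClass τ S p)).trans (inverseHom_phraseValue τ S hr p)

end Homs

end Nanophrase

theorem G1_iso_general (α : Type) (τ : α → α)
    (S : Set (α × α × α)) (r : ℕ) (hr : 1 ≤ r) :
    Nonempty (Gn α τ S r 1 ≃+
      ℤ × ({ij : Fin r × Fin r // ij.1 < ij.2} → PiGrp τ)) :=
  ⟨(Nanophrase.invariantHom τ S).toAddEquiv (Nanophrase.inverseHom τ S hr)
    (Nanophrase.inverseHom_comp_invariantHom τ S hr)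
    (Nanophrase.invariantHom_comp_inverseHom τ S hr)⟩

/-- for any homotopy data `(α,τ,S)` and any `r ≥ 1`, the group
`G_1(α,τ,S,r)` is isomorphic to `ℤ ⊕ ⨁_{1 ≤ i < j ≤ r} π`, where π is the abelian
group generated by α with relations `a + τ(a) = 0`. -/
theorem G1_iso (α : Type) (τ : α → α) (hτ : Function.Involutive τ)
    (S : Set (α × α × α)) (r : ℕ) (hr : 1 ≤ r) :
    Nonempty (Gn α τ S r 1 ≃+
      ℤ × ({ij : Fin r × Fin r // ij.1 < ij.2} → PiGrp τ)) :=
  G1_iso_general α τ S r hr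
end

section
/- For nanowords (1-component nanophrases) and any homotopy data, G_1(α,τ,S,1) ≅ Z; consequently there are no nonconstant finite type invariants of degree 1 for any homotopy of nanowords. -/
open List

attribute [local instance] Classical.propDecidable

/-!
The class of the empty nanoword generates `G_1`: a nanoword of rank one is `AA`, which the
H1 relation kills, and nanowords of higher rank are killed outright. Conversely, counting the
rank-zero generators gives a homomorphism to `ℤ` sending the empty word to `1`: isomorphisms
preserve rank, and every generator occurring in an H1, H2, H3 or rank relation has a letter.
-/

open FreeAbelianGroup

section Phrases

variable {α : Type}

lemma occs_map (f : ℕ × α → ℕ × α) (p : NPhrase α) :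
    occs (p.map (Option.map f)) = (occs p).map f := by
  induction p with
  | nil => rfl
  | cons s t ih => cases s <;> simpa [occs, List.filterMap_cons] using ih

lemma rank_eq_of_iso {p q : NPhrase α} (h : Iso p q) : rank p = rank q := by
  obtain ⟨σ, rfl⟩ := h
  have hletters : lettersOf (p.map (Option.map fun xa => (σ xa.1, xa.2))) =
      (lettersOf p).image σ := by
    ext y
    simp [lettersOf, occs_map]
  rw [rank, rank, hletters, Finset.card_image_of_injective _ σ.injective]

lemma mem_lettersOf_of_mem {p : NPhrase α} {i : ℕ} {a : α} (h : some (i, a) ∈ p) :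
    i ∈ lettersOf p :=
  List.mem_toFinset.mpr (List.mem_map.mpr ⟨(i, a), List.mem_filterMap.mpr ⟨_, h, rfl⟩, rfl⟩)

lemma rank_ne_zero_of_mem {p : NPhrase α} {i : ℕ} {a : α} (h : some (i, a) ∈ p) :
    rank p ≠ 0 :=
  Finset.card_ne_zero_of_mem (mem_lettersOf_of_mem h)

lemma eq_map_some_occs_of_comps_eq_one {p : NPhrase α} (h : comps p = 1) :
    p = (occs p).map some := by
  have hnone : p.countP (fun s => s.isNone) = 0 := by rw [comps] at h; omega
  induction p with
  | nil => rfl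
  | cons s t ih =>
    cases s with
    | none => simp at hnone
    | some v =>
      rw [List.countP_cons_of_neg (by simp)] at hnone
      simpa [occs] using ih (by rw [comps, hnone]) hnone

lemma occs_eq_nil_of_rank_eq_zero {p : NPhrase α} (hr : rank p = 0) : occs p = [] := by
  rw [rank, Finset.card_eq_zero, lettersOf, List.toFinset_eq_empty_iff,
    List.map_eq_nil_iff] at hr
  exact hr

lemma exists_eq_pair_of_rank_eq_one {p : NPhrase α} (hn : IsNano p) (hc : comps p = 1)
    (hr : rank p = 1) : ∃ i a, p = [some (i, a), some (i, a)] := by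
  obtain ⟨x, hx⟩ := Finset.card_eq_one.mp hr
  have hall : ∀ y ∈ (occs p).map Prod.fst, y = x := fun y hy =>
    Finset.mem_singleton.mp (hx ▸ List.mem_toFinset.mpr hy)
  have hlen : (occs p).length = 2 := by
    rw [← List.length_map Prod.fst, ← hn.1 x (by simp [hx]),
      List.count_eq_length.mpr fun y hy => (hall y hy).symm]
  obtain ⟨⟨x₁, a₁⟩, ⟨x₂, a₂⟩, hocc⟩ := List.length_eq_two.mp hlen
  obtain rfl : x₁ = x := hall x₁ (by simp [hocc])
  obtain rfl : x₂ = x₁ := hall x₂ (by simp [hocc])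
  obtain rfl : a₂ = a₁ := hn.2 x₂ a₂ a₁ (by simp [hocc]) (by simp [hocc])
  exact ⟨x₂, a₂, by rw [eq_map_some_occs_of_comps_eq_one hc, hocc]; rfl⟩

end Phrases

section RankZeroCount

variable {α : Type} {r : ℕ}

noncomputable def rankZeroIndicator (α : Type) (r : ℕ) : FreeAbelianGroup (NP α r) →+ ℤ :=
  FreeAbelianGroup.lift fun p => if rank p.1 = 0 then 1 else 0

lemma rankZeroIndicator_of (p : NP α r) :
    rankZeroIndicator α r (of p) = if rank p.1 = 0 then 1 else 0 :=
  FreeAbelianGroup.lift_apply_of _ _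

lemma rankZeroIndicator_of_of_mem {p : NP α r} {i : ℕ} {a : α} (h : some (i, a) ∈ p.1) :
    rankZeroIndicator α r (of p) = 0 := by
  rw [rankZeroIndicator_of, if_neg (rank_ne_zero_of_mem h)]

lemma relSet_subset_ker_rankZeroIndicator (τ : α → α) (S : Set (α × α × α)) (n : ℕ) :
    relSet τ S r n ⊆ (rankZeroIndicator α r).ker := by
  have vanish (p : NP α r) (i : ℕ) (a : α) (h : some (i, a) ∈ p.1) :
      rankZeroIndicator α r (of p) = 0 :=
    rankZeroIndicator_of_of_mem h
  intro g hg
  rw [SetLike.mem_coe, AddMonoidHom.mem_ker]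
  rcases hg with ((((⟨p, q, hiso, rfl⟩ | ⟨p, x, y, i, a, hp, rfl⟩) |
      ⟨p, q, q', x, y, z, i, j, a, b, -, hp, hq, hq', rfl⟩) |
      ⟨p1, p2, p3, p4, q1, q2, q3, q4, x, y, z, t, i, j, k, a, b, c, A, B, C,
        -, rfl, rfl, rfl, h1, h2, h3, h4, h5, h6, h7, h8, rfl⟩) |
      ⟨p, hrank, rfl⟩)
  · rw [map_sub, rankZeroIndicator_of, rankZeroIndicator_of, rank_eq_of_iso hiso, sub_self]
  · exact vanish p i a (by simp [hp])
  · rw [map_add, map_add, vanish p i a (by simp [hp]), vanish q i a (by simp [hq]),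
      vanish q' j b (by simp [hq']), add_zero, add_zero]
  · simp only [map_add, map_sub, vanish p1 i a (by simp [h1]), vanish p2 i a (by simp [h2]),
      vanish p3 i a (by simp [h3]), vanish p4 j b (by simp [h4]), vanish q1 i a (by simp [h5]),
      vanish q2 i a (by simp [h6]), vanish q3 i a (by simp [h7]), vanish q4 j b (by simp [h8]),
      add_zero, sub_zero]
  · rw [rankZeroIndicator_of, if_neg (by omega)]

noncomputable def Gn.rankZeroCount (τ : α → α) (S : Set (α × α × α)) (r n : ℕ) :
    Gn α τ S r n →+ ℤ :=
  QuotientAddGroup.lift _ (rankZeroIndicator α r)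
    ((AddSubgroup.closure_le _).mpr (relSet_subset_ker_rankZeroIndicator τ S n))

end RankZeroCount

section Nanowords

variable {α : Type}

def NP.nil : NP α 1 :=
  ⟨[], ⟨by simp [lettersOf, occs], by simp [occs]⟩, rfl⟩

lemma NP.eq_nil_of_rank_eq_zero {p : NP α 1} (h : rank p.1 = 0) : p = NP.nil :=
  Subtype.ext <| by
    rw [eq_map_some_occs_of_comps_eq_one p.2.2, occs_eq_nil_of_rank_eq_zero h]
    rfl

variable (τ : α → α) (S : Set (α × α × α))

lemma Gn.mk_of_eq_zero_of_rank_ne_zero {p : NP α 1} (h : rank p.1 ≠ 0) :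
    (QuotientAddGroup.mk (of p) : Gn α τ S 1 1) = 0 := by
  refine (QuotientAddGroup.eq_zero_iff _).mpr (AddSubgroup.subset_closure ?_)
  obtain hp | hp := eq_or_lt_of_le (Nat.one_le_iff_ne_zero.mpr h)
  · obtain ⟨i, a, hpair⟩ := exists_eq_pair_of_rank_eq_one p.2.1 p.2.2 hp.symm
    exact .inl <| .inl <| .inl <| .inr ⟨p, [], [], i, a, by simpa using hpair, rfl⟩
  · exact .inr ⟨p, hp, rfl⟩

lemma Gn.mk_of_eq_zsmul_mk_of_nil (p : NP α 1) :
    (QuotientAddGroup.mk (of p) : Gn α τ S 1 1) =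
      (if rank p.1 = 0 then 1 else 0 : ℤ) • QuotientAddGroup.mk (of NP.nil) := by
  by_cases h : rank p.1 = 0
  · rw [if_pos h, one_zsmul, NP.eq_nil_of_rank_eq_zero h]
  · rw [if_neg h, zero_zsmul, Gn.mk_of_eq_zero_of_rank_ne_zero τ S h]

end Nanowords

theorem G1_nanowords_iso_int_general (α : Type) (τ : α → α)
    (S : Set (α × α × α)) :
    Nonempty (Gn α τ S 1 1 ≃+ ℤ) := by
  let nil : Gn α τ S 1 1 := QuotientAddGroup.mk (of NP.nil)
  have count_nil : Gn.rankZeroCount τ S 1 1 nil = 1 := rankZeroIndicator_of NP.nil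
  refine ⟨AddMonoidHom.toAddEquiv (Gn.rankZeroCount τ S 1 1) (zmultiplesHom _ nil) ?_ ?_⟩
  · refine QuotientAddGroup.addMonoidHom_ext _ (FreeAbelianGroup.lift_ext _ _ fun p => ?_)
    change rankZeroIndicator α 1 (of p) • nil = QuotientAddGroup.mk (of p)
    rw [rankZeroIndicator_of, Gn.mk_of_eq_zsmul_mk_of_nil]
  · exact AddMonoidHom.ext_int (by simpa using count_nil)

/-- for nanowords (1-component nanophrases) and any homotopy data
`(α,τ,S)`, `G_1(α,τ,S,1) ≅ ℤ`; consequently every finite type invariant of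
degree 1 of nanowords is constant (there are no nonconstant degree-1 finite type
invariants), since `G_1` is the image of a universal degree-1 invariant and its
only free generator is the class of the trivial nanoword. -/
theorem G1_nanowords_iso_int (α : Type) (τ : α → α) (hτ : Function.Involutive τ)
    (S : Set (α × α × α)) :
    Nonempty (Gn α τ S 1 1 ≃+ ℤ) :=
  G1_nanowords_iso_int_general α τ S
end

section
/- Let (α,τ,S) be homotopy data with S diagonal, l the number of free orbits of τ on α and k the number of fixed points of τ. Then G_2(α,τ,S,1) ≅ Z^{l²−l+1} ⊕ (Z/2)^{k²+2kl−k}. -/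
open List

attribute [local instance] Classical.propDecidable

/-!
Modulo H1 and the rank bound, a one-component nanoword is either empty or of the form `ABAB`, so
`G₂` is generated by the empty word and the classes `⟨a b⟩` of the words `ABAB` with labels `a, b`.
H2 applied to the rank-3 words `CABCBA` and `ABCBAC` gives `⟨a (τ b)⟩ = -⟨a b⟩ = ⟨(τ a) b⟩`, and H3
on a diagonal triple gives `⟨d d⟩ = 0`. Hence `G₂` is spanned by the empty word and the `⟨u v⟩` for
distinct `u, v` in an orientation of `α`, and `2⟨u v⟩ = 0` as soon as `u` or `v` is `τ`-fixed.
Conversely, sending the empty word to `(1, 0)`, a word `ABAB` to `±` the basis vector of the pair of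
orientation representatives of its labels, and every other word to `0` respects all relations, so
these generators are independent. There are `l² - l` ordered pairs of distinct free representatives
and `(k + l)² - (k + l) - (l² - l) = k² + 2kl - k` remaining ones.
-/

noncomputable section

section Orientation

variable {α : Type*} [LinearOrder α] {τ : α → α}

/-- The orientation `α_o`: every fixed point and the smaller element of every free orbit. -/
abbrev OrbitReps (τ : α → α) := {a : α // a ≤ τ a}

def orbitRep (hτ : Function.Involutive τ) (a : α) : OrbitReps τ :=
  ⟨min a (τ a), by
    rcases le_total a (τ a) with h | h
    · rwa [min_eq_left h]
    · rw [min_eq_right h, hτ a]; exact h⟩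

def orbitSign (τ : α → α) (a : α) : ℤ := if a ≤ τ a then 1 else -1

theorem orbitRep_coe (hτ : Function.Involutive τ) (u : OrbitReps τ) : orbitRep hτ u = u :=
  Subtype.ext (min_eq_left u.2)

theorem orbitRep_apply_self (hτ : Function.Involutive τ) (a : α) :
    orbitRep hτ (τ a) = orbitRep hτ a :=
  Subtype.ext (by simp only [orbitRep, hτ a, min_comm])

theorem orbitSign_apply_self (hτ : Function.Involutive τ) {a : α} (ha : τ a ≠ a) :
    orbitSign τ (τ a) = -orbitSign τ a := by
  rcases lt_or_gt_of_ne ha with h | h <;> simp [orbitSign, hτ a, h.le, not_le.2 h]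

theorem apply_orbitRep_eq_iff (hτ : Function.Involutive τ) (a : α) :
    τ (orbitRep hτ a) = orbitRep hτ a ↔ τ a = a := by
  rcases le_total a (τ a) with h | h
  · simp [orbitRep, min_eq_left h]
  · simp only [orbitRep, min_eq_right h, hτ a]
    exact eq_comm

theorem eq_orbitSign_smul_orbitRep {A : Type*} [AddCommGroup A] (hτ : Function.Involutive τ)
    {f : α → A} (hf : ∀ a, f (τ a) = -f a) (a : α) :
    f a = orbitSign τ a • f (orbitRep hτ a) := by
  by_cases h : a ≤ τ a
  · simp [orbitSign, orbitRep, h]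
  · simp [orbitSign, orbitRep, h, min_eq_right (not_le.1 h).le, hf]

variable [Fintype α]

theorem two_mul_card_lt_apply (hτ : Function.Involutive τ) :
    2 * Fintype.card {a // a < τ a} = Fintype.card {a // τ a ≠ a} := by
  have hswap : Fintype.card {a // τ a < a} = Fintype.card {a // a < τ a} :=
    Fintype.card_congr (hτ.toPerm.subtypeEquiv fun a => by simp [hτ a])
  rw [two_mul]
  nth_rw 2 [← hswap]
  rw [← Fintype.card_subtype_or_disjoint]
  · exact Fintype.card_congr (Equiv.subtypeEquivRight fun a => by rw [ne_comm, ne_iff_lt_or_gt])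
  · simp only [Pi.disjoint_iff, Prop.disjoint_iff, not_and, not_lt]
    exact fun a h => h.le

end Orientation

section LinkGroup

variable {α : Type*} [LinearOrder α] (τ : α → α)

abbrev RepPairs := {p : OrbitReps τ × OrbitReps τ // p.1 ≠ p.2}

def IsFreePair (p : RepPairs τ) : Prop := τ p.1.1 ≠ p.1.1 ∧ τ p.1.2 ≠ p.1.2

abbrev FreePairs := {p : RepPairs τ // IsFreePair τ p}

abbrev TorsionPairs := {p : RepPairs τ // ¬IsFreePair τ p}

abbrev LinkGroup := (FreePairs τ → ℤ) × (TorsionPairs τ → ZMod 2)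

variable {τ}

def pairBasis (p : RepPairs τ) : LinkGroup τ :=
  if h : IsFreePair τ p then (Pi.single ⟨p, h⟩ 1, 0) else (0, Pi.single ⟨p, h⟩ 1)

theorem pairBasis_free (f : FreePairs τ) : pairBasis f.1 = (Pi.single f 1, 0) :=
  dif_pos f.2

theorem pairBasis_torsion (t : TorsionPairs τ) : pairBasis t.1 = (0, Pi.single t 1) :=
  dif_neg t.2

theorem pairBasis_add_self {p : RepPairs τ} (h : ¬IsFreePair τ p) :
    pairBasis p + pairBasis p = 0 := by
  simp only [pairBasis, dif_neg h, Prod.mk_add_mk, add_zero, ← Pi.single_add]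
  rw [show (1 + 1 : ZMod 2) = 0 from rfl, Pi.single_zero, Prod.mk_zero_zero]

def linkValue (hτ : Function.Involutive τ) (a b : α) : LinkGroup τ :=
  if h : orbitRep hτ a = orbitRep hτ b then 0
  else (orbitSign τ a * orbitSign τ b) • pairBasis ⟨(orbitRep hτ a, orbitRep hτ b), h⟩

variable (hτ : Function.Involutive τ)

theorem linkValue_self (a : α) : linkValue hτ a a = 0 := dif_pos rfl

theorem linkValue_coe {u v : OrbitReps τ} (h : u ≠ v) :
    linkValue hτ u v = pairBasis ⟨(u, v), h⟩ := by
  simp [linkValue, orbitRep_coe, orbitSign, u.2, v.2, h]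

theorem linkValue_add_self {a b : α} (h : τ a = a ∨ τ b = b) :
    linkValue hτ a b + linkValue hτ a b = 0 := by
  unfold linkValue
  split_ifs
  · exact add_zero 0
  · rw [← smul_add, pairBasis_add_self, smul_zero]
    rintro ⟨ha, hb⟩
    rcases h with h | h
    · exact ha ((apply_orbitRep_eq_iff hτ a).2 h)
    · exact hb ((apply_orbitRep_eq_iff hτ b).2 h)

theorem linkValue_apply_self_right (a b : α) : linkValue hτ a (τ b) = -linkValue hτ a b := by
  by_cases hb : τ b = b
  · rw [hb, eq_neg_iff_add_eq_zero]
    exact linkValue_add_self hτ (Or.inr hb)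
  · simp only [linkValue, orbitRep_apply_self hτ b, orbitSign_apply_self hτ hb]
    split_ifs <;> simp

theorem linkValue_apply_self_left (a b : α) : linkValue hτ (τ a) b = -linkValue hτ a b := by
  by_cases ha : τ a = a
  · rw [ha, eq_neg_iff_add_eq_zero]
    exact linkValue_add_self hτ (Or.inl ha)
  · simp only [linkValue, orbitRep_apply_self hτ a, orbitSign_apply_self hτ ha]
    split_ifs <;> simp

end LinkGroup

section Occurrences

variable {α : Type}

@[simp] theorem occs_nil : occs ([] : NPhrase α) = [] := rfl

@[simp] theorem occs_cons_some (v : ℕ × α) (p : NPhrase α) : occs (some v :: p) = v :: occs p :=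
  rfl

@[simp] theorem occs_append (p q : NPhrase α) : occs (p ++ q) = occs p ++ occs q :=
  List.filterMap_append

theorem length_occs_eq_two_mul_rank {p : NPhrase α} (hp : IsNano p) :
    (occs p).length = 2 * rank p := by
  rw [← List.length_map (f := Prod.fst), ← List.sum_toFinset_count_eq_length]
  change ∑ n ∈ lettersOf p, _ = _
  rw [Finset.sum_congr rfl hp.1, Finset.sum_const, smul_eq_mul, mul_comm, rank]

theorem map_some_occs_of_forall_ne_none {p : NPhrase α} (hp : ∀ s ∈ p, s ≠ none) :
    (occs p).map some = p := by
  induction p with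
  | nil => rfl
  | cons s q ih =>
    obtain ⟨v, rfl⟩ := Option.ne_none_iff_exists'.1 (hp s List.mem_cons_self)
    rw [occs_cons_some, List.map_cons, ih fun t ht => hp t (List.mem_cons_of_mem _ ht)]

theorem map_some_occs (p : NP α 1) : (occs p.1).map some = p.1 := by
  have h := p.2.2
  simp only [comps, add_eq_right, List.countP_eq_zero] at h
  exact map_some_occs_of_forall_ne_none fun s hs hn => by simpa [hn] using h s hs

theorem length_eq_two_mul_rank (p : NP α 1) : p.1.length = 2 * rank p.1 := by
  rw [← map_some_occs p, List.length_map, map_some_occs, length_occs_eq_two_mul_rank p.2.1]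

theorem not_mem_lettersOf_of_isNano_h2 {x y z : NPhrase α} {i j : ℕ} {a b : α}
    (hp : IsNano (x ++ [some (i, a), some (j, b)] ++ y ++ [some (j, b), some (i, a)] ++ z)) :
    i ∉ lettersOf (x ++ y ++ z) ∧ j ∉ lettersOf (x ++ y ++ z) := by
  have hi := hp.1 i (by simp [lettersOf])
  have hj := hp.1 j (by simp [lettersOf])
  simp only [lettersOf, occs_append, List.map_append, List.mem_toFinset, List.count_append,
    ← List.count_pos_iff]
  simp [List.count_cons] at hi hj
  omega

end Occurrences

section Generators

open FreeAbelianGroup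

variable {α : Type}

def wordOf (names : List ℕ) (lab : ℕ → α) : NPhrase α := names.map fun n => some (n, lab n)

theorem occs_wordOf (names : List ℕ) (lab : ℕ → α) :
    occs (wordOf names lab) = names.map fun n => (n, lab n) := by
  simp [occs, wordOf, List.filterMap_map]

theorem occs_wordOf_map_fst (names : List ℕ) (lab : ℕ → α) :
    (occs (wordOf names lab)).map Prod.fst = names := by
  simp [occs_wordOf, Function.comp_def]

theorem lettersOf_wordOf (names : List ℕ) (lab : ℕ → α) :
    lettersOf (wordOf names lab) = names.toFinset := by
  rw [lettersOf, occs_wordOf_map_fst]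

theorem isNano_wordOf {names : List ℕ} (h : ∀ n ∈ names, names.count n = 2) (lab : ℕ → α) :
    IsNano (wordOf names lab) := by
  refine ⟨fun n hn => ?_, fun n a b ha hb => ?_⟩
  · rw [occs_wordOf_map_fst]
    exact h n (by simpa [lettersOf_wordOf] using hn)
  · simp only [occs_wordOf, List.mem_map, Prod.mk.injEq] at ha hb
    obtain ⟨_, _, rfl, rfl⟩ := ha
    obtain ⟨_, _, rfl, rfl⟩ := hb
    rfl

theorem comps_wordOf (names : List ℕ) (lab : ℕ → α) : comps (wordOf names lab) = 1 := by
  simp [comps, wordOf]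

def NP.ofNames (names : List ℕ) (lab : ℕ → α) (h : ∀ n ∈ names, names.count n = 2) : NP α 1 :=
  ⟨wordOf names lab, isNano_wordOf h lab, comps_wordOf names lab⟩

def NP.empty : NP α 1 := ⟨[], by simp [IsNano, lettersOf, occs], rfl⟩

def NP.linked (i j : ℕ) (hij : i ≠ j) (a b : α) : NP α 1 :=
  NP.ofNames [i, j, i, j] (fun n => if n = i then a else b)
    (by simp [List.count_cons, hij, hij.symm])

theorem NP.linked_val (i j : ℕ) (hij : i ≠ j) (a b : α) :
    (NP.linked i j hij a b).1 = [some (i, a), some (j, b), some (i, a), some (j, b)] := by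
  simp [NP.linked, NP.ofNames, wordOf, hij.symm]

abbrev G2Diag (τ : α → α) := Gn α τ {s | ∃ a : α, s = (a, a, a)} 1 2

def wordClass (τ : α → α) (p : NP α 1) : G2Diag τ := QuotientAddGroup.mk (of p)

variable {τ : α → α}

theorem mk_eq_zero_of_mem_relSet {g : FreeAbelianGroup (NP α 1)}
    (h : g ∈ relSet τ {s | ∃ a : α, s = (a, a, a)} 1 2) :
    (QuotientAddGroup.mk g : G2Diag τ) = 0 :=
  (QuotientAddGroup.eq_zero_iff g).2 (AddSubgroup.subset_closure h)

theorem wordClass_eq_of_iso {p q : NP α 1} (h : Iso p.1 q.1) : wordClass τ p = wordClass τ q :=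
  sub_eq_zero.1 (mk_eq_zero_of_mem_relSet (Or.inl (Or.inl (Or.inl (Or.inl ⟨p, q, h, rfl⟩)))))

theorem wordClass_eq_zero_of_H1 {p : NP α 1} {x y : NPhrase α} {i : ℕ} {a : α}
    (hp : p.1 = x ++ [some (i, a), some (i, a)] ++ y) : wordClass τ p = 0 :=
  mk_eq_zero_of_mem_relSet (Or.inl (Or.inl (Or.inl (Or.inr ⟨p, x, y, i, a, hp, rfl⟩))))

theorem wordClass_add_wordClass_add_wordClass_of_H2 {p q q' : NP α 1} {x y z : NPhrase α}
    {i j : ℕ} {a b : α} (hab : a = τ b)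
    (hp : p.1 = x ++ [some (i, a), some (j, b)] ++ y ++ [some (j, b), some (i, a)] ++ z)
    (hq : q.1 = x ++ [some (i, a)] ++ y ++ [some (i, a)] ++ z)
    (hq' : q'.1 = x ++ [some (j, b)] ++ y ++ [some (j, b)] ++ z) :
    wordClass τ p + wordClass τ q + wordClass τ q' = 0 :=
  mk_eq_zero_of_mem_relSet
    (Or.inl (Or.inl (Or.inr ⟨p, q, q', x, y, z, i, j, a, b, hab, hp, hq, hq', rfl⟩)))

theorem wordClass_of_H3 {p₁ p₂ p₃ p₄ q₁ q₂ q₃ q₄ : NP α 1} {x y z t : NPhrase α} {i j k : ℕ}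
    {d : α} {A B C : NSym α} (hA : A = some (i, d)) (hB : B = some (j, d)) (hC : C = some (k, d))
    (h₁ : p₁.1 = x ++ [A, B] ++ y ++ [A, C] ++ z ++ [B, C] ++ t)
    (h₂ : p₂.1 = x ++ [A, B] ++ y ++ [A] ++ z ++ [B] ++ t)
    (h₃ : p₃.1 = x ++ [A] ++ y ++ [A, C] ++ z ++ [C] ++ t)
    (h₄ : p₄.1 = x ++ [B] ++ y ++ [C] ++ z ++ [B, C] ++ t)
    (h₅ : q₁.1 = x ++ [B, A] ++ y ++ [C, A] ++ z ++ [C, B] ++ t)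
    (h₆ : q₂.1 = x ++ [B, A] ++ y ++ [A] ++ z ++ [B] ++ t)
    (h₇ : q₃.1 = x ++ [A] ++ y ++ [C, A] ++ z ++ [C] ++ t)
    (h₈ : q₄.1 = x ++ [B] ++ y ++ [C] ++ z ++ [C, B] ++ t) :
    wordClass τ p₁ + wordClass τ p₂ + wordClass τ p₃ + wordClass τ p₄ =
      wordClass τ q₁ + wordClass τ q₂ + wordClass τ q₃ + wordClass τ q₄ := by
  have h := mk_eq_zero_of_mem_relSet (τ := τ) (Or.inl (Or.inr
    ⟨p₁, p₂, p₃, p₄, q₁, q₂, q₃, q₄, x, y, z, t, i, j, k, d, d, d, A, B, C, ⟨d, rfl⟩,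
      hA, hB, hC, h₁, h₂, h₃, h₄, h₅, h₆, h₇, h₈, rfl⟩))
  simp only [QuotientAddGroup.mk_add, QuotientAddGroup.mk_sub] at h
  rw [← sub_eq_zero, ← h]
  simp only [wordClass]
  abel

theorem wordClass_eq_zero_of_two_lt_rank {p : NP α 1} (h : 2 < rank p.1) : wordClass τ p = 0 :=
  mk_eq_zero_of_mem_relSet (Or.inr ⟨p, h, rfl⟩)

end Generators

section WordValue

open FreeAbelianGroup

variable {α : Type} [LinearOrder α] {τ : α → α} (hτ : Function.Involutive τ)

def wordValue : NPhrase α → ℤ × LinkGroup τ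
  | [] => (1, 0)
  | [some (i, a), some (j, b), some (i', _), some (j', _)] =>
      if i = i' ∧ j = j' ∧ i ≠ j then (0, linkValue hτ a b) else 0
  | _ => 0

theorem wordValue_of_length_ne {p : NPhrase α} (h0 : p ≠ []) (h4 : p.length ≠ 4) :
    wordValue hτ p = 0 := by
  unfold wordValue
  split
  · exact absurd rfl h0
  · exact absurd rfl h4
  · rfl

theorem wordValue_of_blocks {x y z t u v w : NPhrase α} (hlen : (u ++ v ++ w).length = 4)
    (huvw : wordValue hτ (u ++ v ++ w) = 0) :
    wordValue hτ (x ++ u ++ y ++ v ++ z ++ w ++ t) = 0 := by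
  by_cases h4 : (x ++ u ++ y ++ v ++ z ++ w ++ t).length = 4
  · simp only [List.length_append] at hlen h4
    obtain ⟨rfl, rfl, rfl, rfl⟩ : x = [] ∧ y = [] ∧ z = [] ∧ t = [] := by
      simp only [← List.length_eq_zero_iff]; omega
    simpa using huvw
  · refine wordValue_of_length_ne hτ (fun h => ?_) h4
    have h0 := congrArg List.length h
    simp only [List.length_append, List.length_nil] at h0 hlen
    omega

theorem wordValue_rename (σ : ℕ ≃ ℕ) (p : NPhrase α) :
    wordValue hτ (p.map (Option.map fun v => (σ v.1, v.2))) = wordValue hτ p := by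
  by_cases h0 : p = []
  · rw [h0, List.map_nil]
  by_cases h4 : p.length = 4
  · obtain ⟨s₁, s₂, s₃, s₄, rfl⟩ := List.length_eq_four.1 h4
    rcases s₁ with _ | ⟨_, _⟩ <;> rcases s₂ with _ | ⟨_, _⟩ <;> rcases s₃ with _ | ⟨_, _⟩ <;>
      rcases s₄ with _ | ⟨_, _⟩ <;> simp [wordValue, σ.injective.eq_iff]
  · rw [wordValue_of_length_ne hτ h0 h4, wordValue_of_length_ne hτ (by simpa using h0)
      (by simpa using h4)]

theorem wordValue_H1 (x y : NPhrase α) (i : ℕ) (a : α) :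
    wordValue hτ (x ++ [some (i, a), some (i, a)] ++ y) = 0 := by
  by_cases hlen : (x ++ [some (i, a), some (i, a)] ++ y).length = 4
  · rcases x with _ | ⟨x1, _ | ⟨x2, _ | ⟨x3, x⟩⟩⟩ <;>
      rcases y with _ | ⟨y1, _ | ⟨y2, _ | ⟨y3, y⟩⟩⟩ <;>
      simp only [List.length_append, List.length_cons, List.length_nil] at hlen <;> try omega
    all_goals simp only [List.cons_append, List.nil_append]; unfold wordValue; split <;> grind
  · exact wordValue_of_length_ne hτ (by simp) hlen

theorem wordValue_add_wordValue_of_eq_apply {x y z : NPhrase α} {i j : ℕ} {a b : α}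
    (hab : a = τ b) (hi : i ∉ lettersOf (x ++ y ++ z)) (hj : j ∉ lettersOf (x ++ y ++ z)) :
    wordValue hτ (x ++ [some (i, a)] ++ y ++ [some (i, a)] ++ z) +
      wordValue hτ (x ++ [some (j, b)] ++ y ++ [some (j, b)] ++ z) = 0 := by
  -- Only the shapes `XAXA` and `AXAX` have nonzero value; there `a = τ b` makes the two values
  -- opposite, and freshness of `i` and `j` prevents `X` from sharing their names.
  by_cases hlen : (x ++ y ++ z).length = 2
  · simp only [lettersOf, occs, List.filterMap_append, List.map_append, List.mem_toFinset,
      List.mem_append, not_or] at hi hj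
    rcases x with _ | ⟨x1, _ | ⟨x2, x⟩⟩ <;> rcases y with _ | ⟨y1, _ | ⟨y2, y⟩⟩ <;>
      rcases z with _ | ⟨z1, _ | ⟨z2, z⟩⟩ <;>
      simp only [List.length_append, List.length_cons, List.length_nil] at hlen <;> try omega
    all_goals
      (try rcases x1 with _ | ⟨e1, u1⟩) <;> (try rcases x2 with _ | ⟨e2, u2⟩) <;>
      (try rcases y1 with _ | ⟨e3, u3⟩) <;> (try rcases y2 with _ | ⟨e4, u4⟩) <;>
      (try rcases z1 with _ | ⟨e5, u5⟩) <;> (try rcases z2 with _ | ⟨e6, u6⟩)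
    all_goals simp_all [wordValue, linkValue_apply_self_left, linkValue_apply_self_right] <;>
      split_ifs <;> simp_all
  · rw [wordValue_of_length_ne hτ (by simp), wordValue_of_length_ne hτ (by simp), add_zero] <;>
      simp only [List.length_append, List.length_cons, List.length_nil] at hlen ⊢ <;> omega

theorem wordValue_of_two_lt_rank {p : NP α 1} (h : 2 < rank p.1) : wordValue hτ p.1 = 0 :=
  wordValue_of_length_ne hτ (fun h0 => by simp [h0, rank, lettersOf] at h)
    (by rw [length_eq_two_mul_rank]; omega)

theorem wordValue_H2 {x y z : NPhrase α} {i j : ℕ} {a b : α} (hab : a = τ b)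
    (hp : IsNano (x ++ [some (i, a), some (j, b)] ++ y ++ [some (j, b), some (i, a)] ++ z)) :
    wordValue hτ (x ++ [some (i, a), some (j, b)] ++ y ++ [some (j, b), some (i, a)] ++ z) +
      wordValue hτ (x ++ [some (i, a)] ++ y ++ [some (i, a)] ++ z) +
      wordValue hτ (x ++ [some (j, b)] ++ y ++ [some (j, b)] ++ z) = 0 := by
  have hfresh := not_mem_lettersOf_of_isNano_h2 hp
  have hp0 := wordValue_of_blocks hτ (x := x) (y := y) (z := z) (t := []) (w := [])
    (u := [some (i, a), some (j, b)]) (v := [some (j, b), some (i, a)]) rfl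
    (by simp +contextual [wordValue])
  simp only [List.append_nil] at hp0
  rw [hp0, zero_add, wordValue_add_wordValue_of_eq_apply hτ hab hfresh.1 hfresh.2]

theorem wordValue_H3 (x y z t : NPhrase α) {i j k : ℕ} {d : α} {A B C : NSym α}
    (hA : A = some (i, d)) (hB : B = some (j, d)) (hC : C = some (k, d)) :
    wordValue hτ (x ++ [A, B] ++ y ++ [A, C] ++ z ++ [B, C] ++ t) +
      wordValue hτ (x ++ [A, B] ++ y ++ [A] ++ z ++ [B] ++ t) +
      wordValue hτ (x ++ [A] ++ y ++ [A, C] ++ z ++ [C] ++ t) +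
      wordValue hτ (x ++ [B] ++ y ++ [C] ++ z ++ [B, C] ++ t) -
      wordValue hτ (x ++ [B, A] ++ y ++ [C, A] ++ z ++ [C, B] ++ t) -
      wordValue hτ (x ++ [B, A] ++ y ++ [A] ++ z ++ [B] ++ t) -
      wordValue hτ (x ++ [A] ++ y ++ [C, A] ++ z ++ [C] ++ t) -
      wordValue hτ (x ++ [B] ++ y ++ [C] ++ z ++ [C, B] ++ t) = 0 := by
  subst hA hB hC
  rw [wordValue_of_blocks hτ (u := [some (i, d), some (j, d)]) (v := [some (i, d)])
      (w := [some (j, d)]) rfl (by simp [wordValue, linkValue_self]),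
    wordValue_of_blocks hτ (u := [some (i, d)]) (v := [some (i, d), some (k, d)])
      (w := [some (k, d)]) rfl (by simp [wordValue]),
    wordValue_of_blocks hτ (u := [some (j, d)]) (v := [some (k, d)])
      (w := [some (j, d), some (k, d)]) rfl (by simp [wordValue, linkValue_self]),
    wordValue_of_blocks hτ (u := [some (j, d), some (i, d)]) (v := [some (i, d)])
      (w := [some (j, d)]) rfl (by simp +contextual [wordValue]),
    wordValue_of_blocks hτ (u := [some (i, d)]) (v := [some (k, d), some (i, d)])
      (w := [some (k, d)]) rfl (by simp [wordValue, linkValue_self]),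
    wordValue_of_blocks hτ (u := [some (j, d)]) (v := [some (k, d)])
      (w := [some (k, d), some (j, d)]) rfl (by simp +contextual [wordValue]),
    wordValue_of_length_ne hτ (by simp) (by simp; omega),
    wordValue_of_length_ne hτ (by simp) (by simp; omega)]
  simp

theorem lift_wordValue_eq_zero {g : FreeAbelianGroup (NP α 1)}
    (hg : g ∈ relSet τ {s | ∃ a : α, s = (a, a, a)} 1 2) :
    lift (fun p : NP α 1 => wordValue hτ p.1) g = 0 := by
  rcases hg with ((((hg | hg) | hg) | hg) | hg)
  · obtain ⟨p, q, ⟨σ, hσ⟩, rfl⟩ := hg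
    rw [map_sub, lift_apply_of, lift_apply_of, ← hσ, wordValue_rename, sub_self]
  · obtain ⟨p, x, y, i, a, hp, rfl⟩ := hg
    rw [lift_apply_of, hp, wordValue_H1]
  · obtain ⟨p, q, q', x, y, z, i, j, a, b, hab, hp, hq, hq', rfl⟩ := hg
    simp only [map_add, lift_apply_of, hp, hq, hq']
    exact wordValue_H2 hτ hab (hp ▸ p.2.1)
  · obtain ⟨p₁, p₂, p₃, p₄, q₁, q₂, q₃, q₄, x, y, z, t, i, j, k, a, b, c, A, B, C,
      ⟨_, hd⟩, hA, hB, hC, h₁, h₂, h₃, h₄, h₅, h₆, h₇, h₈, rfl⟩ := hg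
    cases hd
    simp only [map_add, map_sub, lift_apply_of, h₁, h₂, h₃, h₄, h₅, h₆, h₇, h₈]
    exact wordValue_H3 hτ x y z t hA hB hC
  · obtain ⟨p, hr, rfl⟩ := hg
    rw [lift_apply_of, wordValue_of_two_lt_rank hτ hr]

def wordValueHom : G2Diag τ →+ ℤ × LinkGroup τ :=
  QuotientAddGroup.lift _ (lift fun p : NP α 1 => wordValue hτ p.1)
    ((AddSubgroup.closure_le _).2 fun _ hg => lift_wordValue_eq_zero hτ hg)

theorem wordValueHom_wordClass (p : NP α 1) :
    wordValueHom hτ (wordClass τ p) = wordValue hτ p.1 :=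
  lift_apply_of _ _

end WordValue

section LinkClass

variable {α : Type} (τ : α → α)

def linkClass (a b : α) : G2Diag τ := wordClass τ (NP.linked 0 1 zero_ne_one a b)

variable {τ}

def renameToZeroOne (i j : ℕ) : ℕ ≃ ℕ := (Equiv.swap i 0).trans (Equiv.swap (Equiv.swap i 0 j) 1)

theorem wordClass_linked {i j : ℕ} (hij : i ≠ j) (a b : α) :
    wordClass τ (NP.linked i j hij a b) = linkClass τ a b := by
  have hj : Equiv.swap i 0 j ≠ 0 := fun h =>
    hij ((Equiv.swap i 0).injective (h.trans (Equiv.swap_apply_left i 0).symm)).symm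
  have hσi : renameToZeroOne i j i = 0 := by
    simp only [renameToZeroOne, Equiv.trans_apply, Equiv.swap_apply_left]
    exact Equiv.swap_apply_of_ne_of_ne hj.symm zero_ne_one
  have hσj : renameToZeroOne i j j = 1 := by
    simp only [renameToZeroOne, Equiv.trans_apply, Equiv.swap_apply_left]
  refine wordClass_eq_of_iso ⟨renameToZeroOne i j, ?_⟩
  simp [NP.linked_val, hσi, hσj]

theorem wordClass_eq_zero_of_names_card {names : List ℕ} (lab : ℕ → α)
    (h : ∀ n ∈ names, names.count n = 2) (hcard : 2 < names.toFinset.card) :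
    wordClass τ (NP.ofNames names lab h) = 0 :=
  wordClass_eq_zero_of_two_lt_rank (by rwa [NP.ofNames, rank, lettersOf_wordOf])

theorem linkClass_add_linkClass_right (c : α) {a b : α} (hab : a = τ b) :
    linkClass τ c a + linkClass τ c b = 0 := by
  have h := wordClass_add_wordClass_add_wordClass_of_H2 (τ := τ)
    (p := NP.ofNames [2, 0, 1, 2, 1, 0] (fun n => if n = 2 then c else if n = 0 then a else b)
      (by decide))
    (q := NP.linked 2 0 (by decide) c a) (q' := NP.linked 2 1 (by decide) c b)
    (x := [some (2, c)]) (y := [some (2, c)]) (z := []) hab rfl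
    (by rw [NP.linked_val]; rfl) (by rw [NP.linked_val]; rfl)
  rwa [wordClass_eq_zero_of_names_card _ _ (by decide), zero_add, wordClass_linked,
    wordClass_linked] at h

theorem linkClass_add_linkClass_left (c : α) {a b : α} (hab : a = τ b) :
    linkClass τ a c + linkClass τ b c = 0 := by
  have h := wordClass_add_wordClass_add_wordClass_of_H2 (τ := τ)
    (p := NP.ofNames [0, 1, 2, 1, 0, 2] (fun n => if n = 2 then c else if n = 0 then a else b)
      (by decide))
    (q := NP.linked 0 2 (by decide) a c) (q' := NP.linked 1 2 (by decide) b c)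
    (x := []) (y := [some (2, c)]) (z := [some (2, c)]) hab rfl
    (by rw [NP.linked_val]; rfl) (by rw [NP.linked_val]; rfl)
  rwa [wordClass_eq_zero_of_names_card _ _ (by decide), zero_add, wordClass_linked,
    wordClass_linked] at h

theorem linkClass_self (d : α) : linkClass τ d d = 0 := by
  -- H3 on `ABACBC` with all labels `d`: the rank-3 words and those containing `AA`, `BB` or `CC`
  -- vanish, leaving `⟨d d⟩ + ⟨d d⟩ = ⟨d d⟩`.
  have h := wordClass_of_H3 (τ := τ) (x := []) (y := []) (z := []) (t := [])
    (A := some (0, d)) (B := some (1, d)) (C := some (2, d)) rfl rfl rfl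
    (p₁ := NP.ofNames [0, 1, 0, 2, 1, 2] (fun _ => d) (by decide))
    (p₂ := NP.linked 0 1 (by decide) d d)
    (p₃ := NP.ofNames [0, 0, 2, 2] (fun _ => d) (by decide))
    (p₄ := NP.linked 1 2 (by decide) d d)
    (q₁ := NP.ofNames [1, 0, 2, 0, 2, 1] (fun _ => d) (by decide))
    (q₂ := NP.ofNames [1, 0, 0, 1] (fun _ => d) (by decide))
    (q₃ := NP.linked 0 2 (by decide) d d)
    (q₄ := NP.ofNames [1, 2, 2, 1] (fun _ => d) (by decide))
    rfl (by rw [NP.linked_val]; rfl) rfl (by rw [NP.linked_val]; rfl) rfl rfl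
    (by rw [NP.linked_val]; rfl) rfl
  rw [wordClass_eq_zero_of_names_card (names := [0, 1, 0, 2, 1, 2]) _ _ (by decide),
    wordClass_eq_zero_of_names_card (names := [1, 0, 2, 0, 2, 1]) _ _ (by decide),
    wordClass_eq_zero_of_H1 (p := NP.ofNames [0, 0, 2, 2] _ _) (x := []) rfl,
    wordClass_eq_zero_of_H1 (p := NP.ofNames [1, 0, 0, 1] _ _) (x := [some (1, d)]) rfl,
    wordClass_eq_zero_of_H1 (p := NP.ofNames [1, 2, 2, 1] _ _) (x := [some (1, d)]) rfl,
    wordClass_linked, wordClass_linked, wordClass_linked] at h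
  simpa using h

theorem linkClass_apply_self_right (a b : α) : linkClass τ a (τ b) = -linkClass τ a b :=
  eq_neg_of_add_eq_zero_left (linkClass_add_linkClass_right a rfl)

theorem linkClass_apply_self_left (a b : α) : linkClass τ (τ a) b = -linkClass τ a b :=
  eq_neg_of_add_eq_zero_left (linkClass_add_linkClass_left b rfl)

end LinkClass

section Inverse

variable {α : Type} [LinearOrder α] {τ : α → α}

theorem linkClass_eq_orbitSign_smul (hτ : Function.Involutive τ) (a b : α) :
    linkClass τ a b =
      (orbitSign τ a * orbitSign τ b) • linkClass τ (orbitRep hτ a) (orbitRep hτ b) := by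
  rw [eq_orbitSign_smul_orbitRep hτ (f := (linkClass τ · b)) (linkClass_apply_self_left · b) a,
    eq_orbitSign_smul_orbitRep hτ (f := linkClass τ _) (linkClass_apply_self_right _) b,
    smul_smul, mul_comm]

def pairClass (p : RepPairs τ) : G2Diag τ := linkClass τ p.1.1 p.1.2

theorem pairClass_add_self {p : RepPairs τ} (h : ¬IsFreePair τ p) :
    pairClass p + pairClass p = 0 := by
  rcases not_and_or.1 h with h | h
  · exact linkClass_add_linkClass_left _ (not_not.1 h).symm
  · exact linkClass_add_linkClass_right _ (not_not.1 h).symm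

theorem wordValueHom_pairClass (hτ : Function.Involutive τ) (p : RepPairs τ) :
    wordValueHom hτ (pairClass p) = (0, pairBasis p) := by
  rw [pairClass, linkClass, wordValueHom_wordClass, NP.linked_val, ← linkValue_coe hτ p.2]
  simp [wordValue]

variable [Fintype α]

def linkClassHom : LinkGroup τ →+ G2Diag τ :=
  AddMonoidHom.coprod
    (∑ f : FreePairs τ, (zmultiplesHom _ (pairClass f.1)).comp (Pi.evalAddMonoidHom _ f))
    (∑ t : TorsionPairs τ, (ZMod.lift 2 ⟨zmultiplesHom _ (pairClass t.1),
      by simpa [two_zsmul] using pairClass_add_self t.2⟩).comp (Pi.evalAddMonoidHom _ t))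

def wordValueHomInv : ℤ × LinkGroup τ →+ G2Diag τ :=
  (zmultiplesHom _ (wordClass τ NP.empty)).coprod linkClassHom

theorem wordValueHomInv_pairBasis (p : RepPairs τ) :
    wordValueHomInv (0, pairBasis p) = pairClass p := by
  unfold pairBasis
  split_ifs with h
  · simp [wordValueHomInv, linkClassHom, Pi.single_apply]
  · have h1 : ∀ g : {g : ℤ →+ G2Diag τ // g 2 = 0}, ZMod.lift 2 g 1 = g.1 1 := fun g => by
      simpa using ZMod.lift_coe 2 g 1
    simp [wordValueHomInv, linkClassHom, Pi.single_apply, apply_ite, h1]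

end Inverse

section Classification

variable {α : Type} [LinearOrder α] [Fintype α] {τ : α → α} (hτ : Function.Involutive τ)

theorem wordValueHomInv_linkValue (a b : α) :
    wordValueHomInv (0, linkValue hτ a b) = linkClass τ a b := by
  rw [linkClass_eq_orbitSign_smul hτ]
  unfold linkValue
  split_ifs with h
  · rw [h, linkClass_self, smul_zero]
    exact map_zero _
  · rw [← smul_zero (orbitSign τ a * orbitSign τ b), ← Prod.smul_mk, map_zsmul,
      wordValueHomInv_pairBasis]
    rfl

theorem wordValueHomInv_wordValue_of_H1 {p : NP α 1} {x y : NPhrase α} {i : ℕ} {a : α}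
    (hp : p.1 = x ++ [some (i, a), some (i, a)] ++ y) :
    wordValueHomInv (wordValue hτ p.1) = wordClass τ p := by
  rw [hp, wordValue_H1, map_zero, wordClass_eq_zero_of_H1 hp]

theorem names_cases_of_length_four {n₁ n₂ n₃ n₄ : ℕ}
    (h : ∀ n ∈ [n₁, n₂, n₃, n₄], [n₁, n₂, n₃, n₄].count n = 2) :
    n₁ = n₂ ∨ n₂ = n₃ ∨ (n₁ = n₃ ∧ n₂ = n₄ ∧ n₁ ≠ n₂) := by
  by_cases h₁₂ : n₁ = n₂
  · exact Or.inl h₁₂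
  by_cases h₂₃ : n₂ = n₃
  · exact Or.inr (Or.inl h₂₃)
  have c₁ := h n₁ (by simp)
  have c₂ := h n₂ (by simp)
  simp only [List.count_cons, List.count_nil, beq_iff_eq, h₁₂, Ne.symm h₁₂] at c₁ c₂
  grind

theorem wordValueHomInv_wordValue (p : NP α 1) :
    wordValueHomInv (wordValue hτ p.1) = wordClass τ p := by
  by_cases hr : 2 < rank p.1
  · rw [wordValue_of_two_lt_rank hτ hr, map_zero, wordClass_eq_zero_of_two_lt_rank hr]
  obtain ⟨L, hL⟩ : ∃ L, occs p.1 = L := ⟨_, rfl⟩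
  have hpL : p.1 = L.map some := by rw [← hL, map_some_occs]
  have hlen : L.length = 2 * rank p.1 := by rw [← hL, length_occs_eq_two_mul_rank p.2.1]
  have hcount : ∀ n ∈ L.map Prod.fst, (L.map Prod.fst).count n = 2 := fun n hn => by
    rw [← hL] at hn ⊢
    exact p.2.1.1 n (List.mem_toFinset.2 hn)
  have hlab : ∀ n a b, (n, a) ∈ L → (n, b) ∈ L → a = b := hL ▸ p.2.1.2
  rcases L with _ | ⟨⟨n₁, u₁⟩, _ | ⟨⟨n₂, u₂⟩, _ | ⟨⟨n₃, u₃⟩, _ | ⟨⟨n₄, u₄⟩, _ | ⟨_, _⟩⟩⟩⟩⟩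
  · rw [show p = NP.empty from Subtype.ext hpL, show (NP.empty (α := α)).1 = [] from rfl]
    simp [wordValue, wordValueHomInv]
  · simp at hcount
  · obtain rfl : n₂ = n₁ := by
      have c₁ := hcount n₁ (by simp)
      simp only [List.map_cons, List.map_nil, List.count_cons, List.count_nil, beq_iff_eq] at c₁
      split_ifs at c₁ <;> omega
    obtain rfl := hlab n₂ u₂ u₁ (by simp) (by simp)
    exact wordValueHomInv_wordValue_of_H1 hτ (x := []) (y := []) hpL
  · simp at hlen; omega
  · simp only [List.map_cons, List.map_nil] at hcount hpL
    rcases names_cases_of_length_four hcount with rfl | rfl | ⟨rfl, rfl, h₁₂⟩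
    · obtain rfl := hlab n₁ u₂ u₁ (by simp) (by simp)
      exact wordValueHomInv_wordValue_of_H1 hτ (x := []) hpL
    · obtain rfl := hlab n₂ u₃ u₂ (by simp) (by simp)
      exact wordValueHomInv_wordValue_of_H1 hτ (x := [some (n₁, u₁)]) hpL
    · obtain rfl := hlab n₁ u₁ u₃ (by simp) (by simp)
      obtain rfl := hlab n₂ u₂ u₄ (by simp) (by simp)
      rw [show p = NP.linked n₁ n₂ h₁₂ u₁ u₂ from Subtype.ext (hpL.trans (NP.linked_val ..).symm),
        NP.linked_val, wordClass_linked, ← wordValueHomInv_linkValue hτ]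
      simp [wordValue, h₁₂]
  · simp at hlen; omega

end Classification

theorem AddMonoidHom.ext_zmod {n : ℕ} [NeZero n] {A : Type*} [AddMonoid A] {f g : ZMod n →+ A}
    (h : f 1 = g 1) : f = g :=
  AddMonoidHom.ext fun x => by
    rw [← ZMod.natCast_zmod_val x, ← nsmul_one, map_nsmul, map_nsmul, h]

theorem AddMonoidHom.prod_ext {M N P : Type*} [AddZeroClass M] [AddZeroClass N] [AddCommMonoid P]
    {f g : M × N →+ P} (hl : f.comp (inl M N) = g.comp (inl M N))
    (hr : f.comp (inr M N) = g.comp (inr M N)) : f = g := by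
  rw [← f.coprod_unique, ← g.coprod_unique, hl, hr]

section Equivalence

variable {α : Type} [LinearOrder α] [Fintype α] {τ : α → α} (hτ : Function.Involutive τ)

theorem wordValueHomInv_comp_wordValueHom :
    wordValueHomInv.comp (wordValueHom hτ) = AddMonoidHom.id (G2Diag τ) := by
  ext p
  exact (congrArg wordValueHomInv (wordValueHom_wordClass hτ p)).trans
    (wordValueHomInv_wordValue hτ p)

theorem wordValueHom_comp_wordValueHomInv :
    (wordValueHom hτ).comp wordValueHomInv = AddMonoidHom.id (ℤ × LinkGroup τ) := by
  have h p := (congrArg (wordValueHom hτ) (wordValueHomInv_pairBasis p)).trans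
    (wordValueHom_pairClass hτ p)
  refine AddMonoidHom.prod_ext (AddMonoidHom.ext_int ?_) (AddMonoidHom.prod_ext
    (AddMonoidHom.functions_ext' _ _ _ fun f => AddMonoidHom.ext_int ?_)
    (AddMonoidHom.functions_ext' _ _ _ fun t => AddMonoidHom.ext_zmod ?_))
  · show wordValueHom hτ (wordValueHomInv (1, 0)) = (1, 0)
    simp only [wordValueHomInv, AddMonoidHom.coprod_apply, zmultiplesHom_apply, one_zsmul,
      map_zero, add_zero, wordValueHom_wordClass]
    rfl
  · simpa [pairBasis_free] using h f.1
  · simpa [pairBasis_torsion] using h t.1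

end Equivalence

section Counting

variable {α : Type*} [LinearOrder α] [Fintype α] {τ : α → α}

theorem card_orbitReps :
    Fintype.card (OrbitReps τ) = Fintype.card {a // τ a = a} + Fintype.card {a // a < τ a} := by
  rw [← Fintype.card_subtype_or_disjoint]
  · exact Fintype.card_congr (Equiv.subtypeEquivRight fun a => by rw [le_iff_eq_or_lt, eq_comm])
  · simp only [Pi.disjoint_iff, Prop.disjoint_iff, not_and]
    exact fun a h => by rw [h]; exact lt_irrefl a

theorem card_offDiag_subtype (X : Type*) [Fintype X] [DecidableEq X] :
    Fintype.card {p : X × X // p.1 ≠ p.2} = Fintype.card X * Fintype.card X - Fintype.card X := by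
  rw [Fintype.card_subtype, ← Finset.card_univ, ← Finset.offDiag_card]
  congr 1
  ext p
  simp

theorem card_freePairs :
    Fintype.card (FreePairs τ) = Fintype.card {a // a < τ a} * Fintype.card {a // a < τ a} -
      Fintype.card {a // a < τ a} := by
  have e : {u : OrbitReps τ // τ u ≠ u} ≃ {a // a < τ a} :=
    (Equiv.subtypeSubtypeEquivSubtypeInter (fun a => a ≤ τ a) (fun a => τ a ≠ a)).trans
      (Equiv.subtypeEquivRight fun a => by rw [lt_iff_le_and_ne, ne_comm])
  rw [← Fintype.card_congr e, ← card_offDiag_subtype]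
  exact Fintype.card_congr
    { toFun := fun f =>
        ⟨(⟨f.1.1.1, f.2.1⟩, ⟨f.1.1.2, f.2.2⟩), fun h => f.1.2 (congrArg Subtype.val h)⟩
      invFun := fun q => ⟨⟨(q.1.1.1, q.1.2.1), fun h => q.2 (Subtype.ext h)⟩, q.1.1.2, q.1.2.2⟩
      left_inv := fun _ => rfl
      right_inv := fun _ => rfl }

theorem card_torsionPairs :
    Fintype.card (TorsionPairs τ) = Fintype.card (RepPairs τ) - Fintype.card (FreePairs τ) :=
  Fintype.card_subtype_compl _

end Counting

theorem nonempty_addEquiv_fin (F T : Type*) [Fintype F] [Fintype T] :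
    Nonempty (ℤ × (F → ℤ) × (T → ZMod 2) ≃+
      (Fin (Fintype.card F + 1) → ℤ) × (Fin (Fintype.card T) → ZMod 2)) :=
  ⟨AddEquiv.prodAssoc.symm.trans (AddEquiv.prodCongr
    ((LinearEquiv.piOptionEquivProd ℤ).symm.toAddEquiv.trans
      (LinearEquiv.piCongrLeft ℤ (fun _ => ℤ) (Fintype.equivFinOfCardEq (by simp))).toAddEquiv)
    (LinearEquiv.piCongrLeft ℤ (fun _ => ZMod 2) (Fintype.equivFin T)).toAddEquiv)⟩

end

/-- let `(α,τ,S)` be homotopy data with α finite, `S` diagonal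
(`S = {(a,a,a) : a ∈ α}`), `l` the number of free orbits of τ on α (so `2l`
non-fixed points) and `k` the number of fixed points of τ.  Then
`G_2(α,τ,S,1) ≅ ℤ^(l²−l+1) ⊕ (ℤ/2)^(k²+2kl−k)`. -/
theorem G2_diagonal_S_iso (α : Type) [Fintype α]
    (τ : α → α) (hτ : Function.Involutive τ) (k l : ℕ)
    (hk : k = (Finset.univ.filter (fun a : α => τ a = a)).card)
    (hl : 2 * l = (Finset.univ.filter (fun a : α => τ a ≠ a)).card) :
    Nonempty (Gn α τ {s | ∃ a : α, s = (a, a, a)} 1 2 ≃+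
      (Fin (l * l - l + 1) → ℤ) × (Fin (k * k + 2 * k * l - k) → ZMod 2)) := by
  let _ : LinearOrder α := LinearOrder.lift' _ (Fintype.equivFin α).injective
  have hk' : Fintype.card {a // τ a = a} = k := by rw [hk, Fintype.card_subtype]
  have hl' : Fintype.card {a // a < τ a} = l := by
    have h := two_mul_card_lt_apply hτ
    rw [Fintype.card_subtype (fun a => τ a ≠ a)] at h
    omega
  have hF : Fintype.card (FreePairs τ) = l * l - l := by rw [card_freePairs, hl']
  have hT : Fintype.card (TorsionPairs τ) = k * k + 2 * k * l - k := by
    rw [card_torsionPairs, card_offDiag_subtype, card_orbitReps, hF, hk', hl']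
    have hl₂ := Nat.le_mul_self l
    have hk₂ := Nat.le_mul_self k
    have hsq : (k + l) * (k + l) = k * k + 2 * k * l + l * l := by ring
    omega
  obtain ⟨e⟩ := nonempty_addEquiv_fin (FreePairs τ) (TorsionPairs τ)
  rw [hF, hT] at e
  exact ⟨(AddMonoidHom.toAddEquiv _ _ (wordValueHomInv_comp_wordValueHom hτ)
    (wordValueHom_comp_wordValueHomInv hτ)).trans e⟩
end
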